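/- Coordinate-wise pruning criterion for the ∞-norm. Let D be a decision tree over ℝ^m in which every internal node condition is a single-feature threshold comparison of the form x'_i ≤ t. Fix a leaf l of D, an input x ∈ ℝ^m, and ε ≥ 0. For each coordinate i ∈ {1, …, m} let S_i ⊆ ℝ be the set of values v such that every threshold condition on coordinate i appearing on the path from the root to l is satisfied by v in the polarity of the branch taken (v ≤ t for positive branches and v > t for negative branches); S_i = ℝ if coordinate i does not appear on the path. Then there exists x' ∈ ℝ^m with ‖x − x'‖_∞ ≤ ε such that the valuation traversal of D on x' reaches leaf l, if and only if S_i ∩ [x_i − ε, x_i + ε] ≠ ∅ for every coordinate i. -/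

import Mathlib

/-- A decision tree over `ℝ^m` in which every internal node condition is a single-feature
threshold comparison `x'_i ≤ t`: an internal node carries a coordinate `i` and a threshold
`t`, a leaf carries a real weight. -/
inductive TTree (m : ℕ) : Type where
  | leaf (w : ℝ) : TTree m
  | node (i : Fin m) (t : ℝ) (pos neg : TTree m) : TTree m

namespace TTree

variable {m : ℕ}

/-- The root-to-leaf path (as a list of branch choices, `true` = positive child) followed
by the valuation traversal of `D` on input `x'`: at an internal node with condition
`x'_i ≤ t`, go to the positive child if `x' i ≤ t` and to the negative child otherwise. -/
noncomputable def traverse : TTree m → (Fin m → ℝ) → List Bool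
  | leaf _, _ => []
  | node i t p n, x => if x i ≤ t then true :: p.traverse x else false :: n.traverse x

/-- `l` identifies a leaf of `D` (i.e. `l` is a valid root-to-leaf path). -/
def IsLeaf : TTree m → List Bool → Prop
  | leaf _, [] => True
  | node _ _ p _, true :: l => p.IsLeaf l
  | node _ _ _ n, false :: l => n.IsLeaf l
  | _, _ => False

/-- The threshold conditions appearing on the root-to-leaf path `l`, each recorded as
`(coordinate, threshold, polarity of the branch taken)`. -/
def pathConds : TTree m → List Bool → List (Fin m × ℝ × Bool)
  | node i t p _, true :: l => (i, t, true) :: p.pathConds l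
  | node i t _ n, false :: l => (i, t, false) :: n.pathConds l
  | _, _ => []

/-- `S_i`: the set of values `v` satisfying every threshold condition on coordinate `i`
appearing on the path from the root to `l`, in the polarity of the branch taken
(`v ≤ t` for positive branches, `v > t` for negative branches).  If coordinate `i` does
not appear on the path then `S_i = ℝ`. -/
def S (D : TTree m) (l : List Bool) (i : Fin m) : Set ℝ :=
  {v : ℝ | ∀ p ∈ D.pathConds l, p.1 = i → (if p.2.2 then v ≤ p.2.1 else p.2.1 < v)}

end TTree

/-! The inputs whose traversal reaches the leaf `l` form the box `∏ i, S_i`, and the closed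
sup-norm ball of radius `ε` about `x` is the box `∏ i, [x_i - ε, x_i + ε]`. Two boxes meet
if and only if they meet in every coordinate. -/

namespace TTree

variable {m : ℕ}

theorem traverse_eq_iff_forall_pathConds {D : TTree m} {l : List Bool} (hl : D.IsLeaf l)
    (x : Fin m → ℝ) :
    D.traverse x = l ↔
      ∀ c ∈ D.pathConds l, if c.2.2 then x c.1 ≤ c.2.1 else c.2.1 < x c.1 := by
  induction D generalizing l with
  | leaf =>
    cases l with
    | nil => simp [traverse, pathConds]
    | cons => simp [IsLeaf] at hl
  | node i t p n ihp ihn =>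
    match l, hl with
    | true :: l, hl =>
      by_cases h : x i ≤ t <;>
        simp [traverse, pathConds, h, ihp hl, -Prod.forall]
    | false :: l, hl =>
      by_cases h : x i ≤ t <;>
        simp [traverse, pathConds, h, ihn hl, -Prod.forall, not_le.mp]

theorem traverse_eq_iff_forall_mem_S {D : TTree m} {l : List Bool} (hl : D.IsLeaf l)
    (x : Fin m → ℝ) : D.traverse x = l ↔ ∀ i, x i ∈ D.S l i := by
  rw [traverse_eq_iff_forall_pathConds hl]
  exact ⟨fun h i c hc hci => hci ▸ h c hc, fun h c hc => h c.1 c hc rfl⟩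

end TTree

theorem norm_sub_le_iff_forall_mem_Icc {ι : Type*} [Fintype ι] {x y : ι → ℝ} {ε : ℝ}
    (hε : 0 ≤ ε) : ‖x - y‖ ≤ ε ↔ ∀ i, y i ∈ Set.Icc (x i - ε) (x i + ε) := by
  rw [← dist_eq_norm, ← Metric.mem_closedBall', closedBall_pi x hε]
  simp only [Set.mem_univ_pi, Real.closedBall_eq_Icc]

/-- **Coordinate-wise pruning criterion for the `∞`-norm.** Let `D` be a decision tree
over `ℝ^m` with single-feature threshold conditions, `l` a leaf of `D`, `x ∈ ℝ^m` and
`ε ≥ 0`.  There exists `x'` with `‖x − x'‖_∞ ≤ ε` whose valuation traversal reaches leaf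
`l`, if and only if `S_i ∩ [x_i − ε, x_i + ε] ≠ ∅` for every coordinate `i`.
(Here `‖·‖` on `Fin m → ℝ` is the supremum norm.) -/
theorem pruning_criterion_sup_norm {m : ℕ} (D : TTree m) (l : List Bool)
    (hl : D.IsLeaf l) (x : Fin m → ℝ) (ε : ℝ) (hε : 0 ≤ ε) :
    (∃ x' : Fin m → ℝ, ‖x - x'‖ ≤ ε ∧ D.traverse x' = l) ↔
    (∀ i : Fin m, (TTree.S D l i ∩ Set.Icc (x i - ε) (x i + ε)).Nonempty) := by
  simp only [norm_sub_le_iff_forall_mem_Icc hε, TTree.traverse_eq_iff_forall_mem_S hl,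
    ← forall_and, Set.Nonempty, Set.mem_inter_iff, and_comm, Classical.skolem]
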